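/- arXiv:2002.09521 — 6 statements merged into one kernel-verified Lean document; each statement's English description precedes it below -/
import Mathlib

section
/- Let q > 2 be a prime power, let m ≥ 4 and set k = ⌊m/2⌋. If A is an m-general set in F_q^n, then |A| ≤ k · q^(n/k) / ((q-1)^(1-2/k) · (q-2)^(1/k)). -/
/-- A subset `A` of `F^n` is `m`-general if every `m`-element subset of `A`
is affinely independent. -/
def IsMGeneral (F : Type*) [Field F] {n : ℕ} (m : ℕ) (A : Set (Fin n → F)) : Prop :=
  ∀ s : Finset (Fin n → F), ↑s ⊆ A → s.card = m →
    AffineIndependent F (fun x : s => (x : Fin n → F))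



lemma key_aff {F : Type*} [Field F] [Fintype F] {n m : ℕ} {A : Set (Fin n → F)}
    (hA : IsMGeneral F m A) (hsize : m ≤ A.ncard) {t : Finset (Fin n → F)}
    (ht : ↑t ⊆ A) (htc : t.card ≤ m) (w : (Fin n → F) → F)
    (hw0 : ∑ x ∈ t, w x = 0) (hwv : ∑ x ∈ t, w x • x = 0) :
    ∀ x ∈ t, w x = 0 := by
  classical
  have hfin : A.Finite := Set.toFinite A
  have htB : t ⊆ hfin.toFinset := fun x hx => hfin.mem_toFinset.mpr (ht hx)
  have hBcard : m ≤ hfin.toFinset.card := by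
    rw [← Set.ncard_eq_toFinset_card A hfin]; exact hsize
  obtain ⟨u, htu, huB, huc⟩ := Finset.exists_subsuperset_card_eq htB htc hBcard
  have hai := hA u (fun x hx => hfin.mem_toFinset.mp (huB hx)) huc
  rw [affineIndependent_iff] at hai
  set emb : t ↪ u := ⟨fun x => ⟨x.1, htu x.2⟩, fun a b hab => Subtype.ext
    (by have := congrArg Subtype.val hab; exact this)⟩ with hemb
  have h1 : ∑ e ∈ t.attach.map emb, w ↑e = 0 := by
    rw [Finset.sum_map]
    exact (Finset.sum_attach t w).trans hw0
  have h2 : ∑ e ∈ t.attach.map emb, w ↑e • (e : Fin n → F) = 0 := by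
    rw [Finset.sum_map]
    exact (Finset.sum_attach t (fun x => w x • x)).trans hwv
  intro x hx
  exact hai (t.attach.map emb) (fun e => w ↑e) h1 h2 ⟨x, htu hx⟩
    (Finset.mem_map.mpr ⟨⟨x, hx⟩, Finset.mem_attach _ _, rfl⟩)

set_option linter.unusedSectionVars false
set_option linter.unusedVariables false

section Machinery

open scoped Classical

variable {F : Type*} [Field F] {n : ℕ}

/-- a chosen element of a finset of vectors -/
noncomputable def pta (s : Finset (Fin n → F)) : Fin n → F :=
  if h : s.Nonempty then h.choose else 0

lemma pta_mem {s : Finset (Fin n → F)} (h : s.Nonempty) : pta s ∈ s := by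
  rw [pta, dif_pos h]; exact h.choose_spec

/-- second chosen element -/
noncomputable def ptb (s : Finset (Fin n → F)) : Fin n → F := pta (s.erase (pta s))

noncomputable def rest (s : Finset (Fin n → F)) : Finset (Fin n → F) :=
  (s.erase (pta s)).erase (ptb s)

section Props
variable {s : Finset (Fin n → F)} (h2 : 2 ≤ s.card)

include h2

lemma pta_mem' : pta s ∈ s := pta_mem (Finset.card_pos.mp (by omega))

lemma ptb_mem_erase : ptb s ∈ s.erase (pta s) := by
  refine pta_mem (Finset.card_pos.mp ?_)
  rw [Finset.card_erase_of_mem (pta_mem' h2)]; omega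

lemma ptb_mem : ptb s ∈ s := Finset.mem_of_mem_erase (ptb_mem_erase h2)

lemma ptb_ne_pta : ptb s ≠ pta s := Finset.ne_of_mem_erase (ptb_mem_erase h2)

lemma rest_subset : rest s ⊆ s := fun x hx =>
  Finset.mem_of_mem_erase (Finset.mem_of_mem_erase hx)

lemma rest_card : (rest s).card = s.card - 2 := by
  rw [rest, Finset.card_erase_of_mem (ptb_mem_erase h2),
    Finset.card_erase_of_mem (pta_mem' h2)]
  omega

lemma pta_not_mem_rest : pta s ∉ rest s := by
  intro hx
  exact (Finset.ne_of_mem_erase (Finset.mem_of_mem_erase hx)) rfl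

lemma ptb_not_mem_rest : ptb s ∉ rest s := fun hx => (Finset.ne_of_mem_erase hx) rfl

lemma mem_rest {x : Fin n → F} (hx : x ∈ s) (hxa : x ≠ pta s) (hxb : x ≠ ptb s) :
    x ∈ rest s := Finset.mem_erase.mpr ⟨hxb, Finset.mem_erase.mpr ⟨hxa, hx⟩⟩

end Props

/-- the weight function built from a subset, generic weights on `rest s`, and a parameter `c` -/
noncomputable def wfun (s : Finset (Fin n → F)) {j : ℕ} (hj : (rest s).card = j)
    (g : Fin j → F) (c : F) : (Fin n → F) → F :=
  fun x =>
    if x = pta s then (if (1 - ∑ i, g i) ≠ 0 then c * (1 - ∑ i, g i) else c)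
    else if x = ptb s then (if (1 - ∑ i, g i) ≠ 0 then (1 - c) * (1 - ∑ i, g i) else -c)
    else if hx : x ∈ rest s then g ((Finset.equivFinOfCardEq hj) ⟨x, hx⟩)
    else 0

section WfunProps

variable {s : Finset (Fin n → F)} {j : ℕ} (hj : (rest s).card = j) (g : Fin j → F) (c : F)
  (h2 : 2 ≤ s.card)

lemma wfun_pta : wfun s hj g c (pta s) =
    (if (1 - ∑ i, g i) ≠ 0 then c * (1 - ∑ i, g i) else c) := by
  rw [wfun, if_pos rfl]

lemma wfun_ptb (h2 : 2 ≤ s.card) : wfun s hj g c (ptb s) =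
    (if (1 - ∑ i, g i) ≠ 0 then (1 - c) * (1 - ∑ i, g i) else -c) := by
  rw [wfun, if_neg (ptb_ne_pta h2), if_pos rfl]

lemma wfun_rest (h2 : 2 ≤ s.card) {x : Fin n → F} (hx : x ∈ rest s) :
    wfun s hj g c x = g ((Finset.equivFinOfCardEq hj) ⟨x, hx⟩) := by
  have hxa : x ≠ pta s := fun h => pta_not_mem_rest h2 (h ▸ hx)
  have hxb : x ≠ ptb s := fun h => ptb_not_mem_rest h2 (h ▸ hx)
  rw [wfun, if_neg hxa, if_neg hxb, dif_pos hx]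

lemma wfun_not_mem (h2 : 2 ≤ s.card) {x : Fin n → F} (hx : x ∉ s) : wfun s hj g c x = 0 := by
  have hxa : x ≠ pta s := fun h => hx (h ▸ pta_mem' h2)
  have hxb : x ≠ ptb s := fun h => hx (h ▸ ptb_mem h2)
  have hxr : x ∉ rest s := fun h => hx (rest_subset h2 h)
  rw [wfun, if_neg hxa, if_neg hxb, dif_neg hxr]

lemma wfun_ne_zero (h2 : 2 ≤ s.card) (hg : ∀ i, g i ≠ 0) (hc0 : c ≠ 0) (hc1 : c ≠ 1)
    {x : Fin n → F} (hx : x ∈ s) : wfun s hj g c x ≠ 0 := by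
  by_cases hxa : x = pta s
  · subst hxa; rw [wfun_pta]
    split_ifs with h
    · exact mul_ne_zero hc0 h
    · exact hc0
  · by_cases hxb : x = ptb s
    · subst hxb; rw [wfun_ptb _ _ _ h2]
      split_ifs with h
      · exact mul_ne_zero (fun h1 => hc1 (by linear_combination -h1)) h
      · exact neg_ne_zero.mpr hc0
    · rw [wfun_rest _ _ _ h2 (mem_rest h2 hx hxa hxb)]
      exact hg _

lemma sum_wfun_rest (h2 : 2 ≤ s.card) :
    ∑ x ∈ rest s, wfun s hj g c x = ∑ i, g i := by
  rw [← Finset.sum_coe_sort (rest s) (wfun s hj g c)]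
  rw [← Equiv.sum_comp (Finset.equivFinOfCardEq hj).symm
    (fun x : (rest s) => wfun s hj g c ↑x)]
  refine Finset.sum_congr rfl fun i _ => ?_
  rw [wfun_rest _ _ _ h2 (((Finset.equivFinOfCardEq hj).symm i).2)]
  congr 1
  simp

lemma sum_wfun (h2 : 2 ≤ s.card) : ∑ x ∈ s, wfun s hj g c x = 1 := by
  have hs : s = insert (pta s) (insert (ptb s) (rest s)) := by
    ext x
    simp only [Finset.mem_insert]
    constructor
    · intro hx
      by_cases hxa : x = pta s
      · exact Or.inl hxa
      by_cases hxb : x = ptb s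
      · exact Or.inr (Or.inl hxb)
      exact Or.inr (Or.inr (mem_rest h2 hx hxa hxb))
    · rintro (rfl | rfl | hx)
      · exact pta_mem' h2
      · exact ptb_mem h2
      · exact rest_subset h2 hx
  rw [Finset.sum_congr hs (fun _ _ => rfl), Finset.sum_insert (by
      simp only [Finset.mem_insert]
      push_neg
      exact ⟨(ptb_ne_pta h2).symm, pta_not_mem_rest h2⟩),
    Finset.sum_insert (ptb_not_mem_rest h2)]
  rw [wfun_pta, wfun_ptb _ _ _ h2, sum_wfun_rest _ _ _ h2]
  split_ifs with h
  · ring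
  · have : (1 : F) - ∑ i, g i = 0 := by push_neg at h; exact h
    linear_combination -this

end WfunProps

end Machinery

section Theta

open scoped Classical

variable {F : Type*} [Field F] {n : ℕ}

lemma theta_hj (k : ℕ) (hk2 : 2 ≤ k) (B : Finset (Fin n → F))
    (u : {s // s ∈ B.powersetCard k} × (Fin (k-2) → {c : F // c ≠ 0})
      × {c : F // c ≠ 0 ∧ c ≠ 1}) :
    (rest u.1.1).card = k - 2 := by
  have hs := (Finset.mem_powersetCard.mp u.1.2).2
  rw [rest_card (by omega : 2 ≤ u.1.1.card), hs]

noncomputable def theta (k : ℕ) (hk2 : 2 ≤ k) (B : Finset (Fin n → F))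
    (u : {s // s ∈ B.powersetCard k} × (Fin (k-2) → {c : F // c ≠ 0})
      × {c : F // c ≠ 0 ∧ c ≠ 1}) : Fin n → F :=
  ∑ x ∈ u.1.1, wfun u.1.1 (theta_hj k hk2 B u) (fun i => (u.2.1 i : F)) (u.2.2 : F) x • x

lemma theta_inj [Fintype F] {m k : ℕ} {A : Set (Fin n → F)}
    (hA : IsMGeneral F m A) (hsize : m ≤ A.ncard) (hk2 : 2 ≤ k) (hkm : 2*k ≤ m)
    (B : Finset (Fin n → F)) (hB : ↑B ⊆ A) :
    Function.Injective (theta k hk2 B) := by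
  rintro ⟨⟨s₁, hs₁⟩, g₁, c₁⟩ ⟨⟨s₂, hs₂⟩, g₂, c₂⟩ h
  obtain ⟨hs₁B, hs₁c⟩ := Finset.mem_powersetCard.mp hs₁
  obtain ⟨hs₂B, hs₂c⟩ := Finset.mem_powersetCard.mp hs₂
  have h21 : 2 ≤ s₁.card := by omega
  have h22 : 2 ≤ s₂.card := by omega
  have hj₁ : (rest s₁).card = k - 2 := theta_hj k hk2 B (⟨s₁, hs₁⟩, g₁, c₁)
  have hj₂ : (rest s₂).card = k - 2 := theta_hj k hk2 B (⟨s₂, hs₂⟩, g₂, c₂)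
  have h' : ∑ x ∈ s₁, wfun s₁ hj₁ (fun i => (g₁ i : F)) (c₁ : F) x • x
      = ∑ x ∈ s₂, wfun s₂ hj₂ (fun i => (g₂ i : F)) (c₂ : F) x • x := h
  have ht1 : s₁ ⊆ s₁ ∪ s₂ := Finset.subset_union_left
  have ht2 : s₂ ⊆ s₁ ∪ s₂ := Finset.subset_union_right
  have h1z : ∀ x ∉ s₁, wfun s₁ hj₁ (fun i => (g₁ i : F)) (c₁ : F) x = 0 :=
    fun x hx => wfun_not_mem _ _ _ h21 hx
  have h2z : ∀ x ∉ s₂, wfun s₂ hj₂ (fun i => (g₂ i : F)) (c₂ : F) x = 0 :=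
    fun x hx => wfun_not_mem _ _ _ h22 hx
  have hz := key_aff hA hsize (t := s₁ ∪ s₂)
    (by
      intro x hx
      rcases Finset.mem_union.mp (by exact_mod_cast hx) with h'' | h''
      · exact hB (hs₁B h'')
      · exact hB (hs₂B h''))
    (le_trans (Finset.card_union_le s₁ s₂) (by omega))
    (fun x => wfun s₁ hj₁ (fun i => (g₁ i : F)) (c₁ : F) x
      - wfun s₂ hj₂ (fun i => (g₂ i : F)) (c₂ : F) x)
    (by
      rw [Finset.sum_sub_distrib,
        ← Finset.sum_subset ht1 (fun x _ hx => h1z x hx),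
        ← Finset.sum_subset ht2 (fun x _ hx => h2z x hx),
        sum_wfun _ _ _ h21, sum_wfun _ _ _ h22, sub_self])
    (by
      have hdist : ∀ x ∈ s₁ ∪ s₂,
          (wfun s₁ hj₁ (fun i => (g₁ i : F)) (c₁ : F) x
            - wfun s₂ hj₂ (fun i => (g₂ i : F)) (c₂ : F) x) • x
          = wfun s₁ hj₁ (fun i => (g₁ i : F)) (c₁ : F) x • x
            - wfun s₂ hj₂ (fun i => (g₂ i : F)) (c₂ : F) x • x :=
        fun x _ => sub_smul _ _ _
      rw [Finset.sum_congr rfl hdist, Finset.sum_sub_distrib,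
        ← Finset.sum_subset ht1 (fun x _ hx => by rw [h1z x hx, zero_smul]),
        ← Finset.sum_subset ht2 (fun x _ hx => by rw [h2z x hx, zero_smul]),
        sub_eq_zero]
      exact h')
  -- the two weight functions agree everywhere
  have hww : wfun s₁ hj₁ (fun i => (g₁ i : F)) (c₁ : F)
      = wfun s₂ hj₂ (fun i => (g₂ i : F)) (c₂ : F) := by
    funext x
    by_cases hx : x ∈ s₁ ∪ s₂
    · exact sub_eq_zero.mp (hz x hx)
    · rw [h1z x (fun h'' => hx (ht1 h'')), h2z x (fun h'' => hx (ht2 h''))]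
  -- recover the subset
  have hss : s₁ = s₂ := by
    ext x
    constructor
    · intro hx
      by_contra hx2
      exact wfun_ne_zero hj₁ (fun i => (g₁ i : F)) (c₁ : F) h21 (fun i => (g₁ i).2)
        c₁.2.1 c₁.2.2 hx (by rw [hww]; exact h2z x hx2)
    · intro hx
      by_contra hx2
      exact wfun_ne_zero hj₂ (fun i => (g₂ i : F)) (c₂ : F) h22 (fun i => (g₂ i).2)
        c₂.2.1 c₂.2.2 hx (by rw [← hww]; exact h1z x hx2)
  subst hss
  have hpr : hj₁ = hj₂ := rfl
  subst hpr
  -- recover g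
  have hg : g₁ = g₂ := by
    funext i
    have e1 : wfun s₁ hj₁ (fun i => (g₁ i : F)) (c₁ : F)
        ((Finset.equivFinOfCardEq hj₁).symm i : Fin n → F) = g₁ i := by
      rw [wfun_rest _ _ _ h21 ((Finset.equivFinOfCardEq hj₁).symm i).2]
      congr 1
      simp
    have e2 : wfun s₁ hj₁ (fun i => (g₂ i : F)) (c₂ : F)
        ((Finset.equivFinOfCardEq hj₁).symm i : Fin n → F) = g₂ i := by
      rw [wfun_rest _ _ _ h21 ((Finset.equivFinOfCardEq hj₁).symm i).2]
      congr 1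
      simp
    have := congrFun hww ((Finset.equivFinOfCardEq hj₁).symm i : Fin n → F)
    rw [e1, e2] at this
    exact Subtype.ext this
  subst hg
  -- recover c
  have hc : (c₁ : F) = (c₂ : F) := by
    have hpt := congrFun hww (pta s₁)
    rw [wfun_pta, wfun_pta] at hpt
    split_ifs at hpt with hcond
    · exact mul_right_cancel₀ hcond hpt
    · exact hpt
  simp only [Prod.mk.injEq, Subtype.mk.injEq]
  exact ⟨trivial, trivial, Subtype.ext hc⟩

end Theta


lemma aux_pow_le_choose : ∀ (k N : ℕ), k ≤ N → N ^ k ≤ k ^ k * N.choose k := by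
  intro k
  induction k with
  | zero => intro N _; simp
  | succ k ih =>
    intro N hN
    obtain ⟨n, rfl⟩ : ∃ n, N = n + 1 := ⟨N - 1, by omega⟩
    have hkn : k ≤ n := by omega
    rcases Nat.eq_zero_or_pos k with rfl | hkpos
    · simp [Nat.choose_one_right]
    · have h4 : (n+1)^k ≤ (k+1)^k * n.choose k := by
        have h1 : (n+1)^k * k^k ≤ (k+1)^k * n^k := by
          rw [← mul_pow, ← mul_pow]
          exact Nat.pow_le_pow_left (by nlinarith) k
        have h2 : (k+1)^k * n^k ≤ (k+1)^k * (k^k * n.choose k) :=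
          Nat.mul_le_mul_left _ (ih n hkn)
        have h3 : (n+1)^k * k^k ≤ ((k+1)^k * n.choose k) * k^k := by
          calc (n+1)^k * k^k ≤ (k+1)^k * (k^k * n.choose k) := le_trans h1 h2
          _ = ((k+1)^k * n.choose k) * k^k := by ring
        exact Nat.le_of_mul_le_mul_right h3 (Nat.pow_pos hkpos)
      calc (n+1)^(k+1) = (n+1)^k * (n+1) := by ring
        _ ≤ ((k+1)^k * n.choose k) * (n+1) := Nat.mul_le_mul_right _ h4
        _ = (k+1)^k * ((n+1) * n.choose k) := by ring
        _ = (k+1)^k * ((n+1).choose (k+1) * (k+1)) := by rw [Nat.add_one_mul_choose_eq]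
        _ = (k+1)^(k+1) * (n+1).choose (k+1) := by ring

open scoped Classical in
lemma card_ne_zero_sub {F : Type*} [Field F] [Fintype F] {q : ℕ} (hqcard : Fintype.card F = q) :
    Fintype.card {c : F // c ≠ 0} = q - 1 := by
  rw [Fintype.card_subtype_compl, Fintype.card_subtype_eq, hqcard]

open scoped Classical in
lemma card_ne01 {F : Type*} [Field F] [Fintype F] {q : ℕ} (hqcard : Fintype.card F = q) :
    Fintype.card {c : F // c ≠ 0 ∧ c ≠ 1} = q - 2 := by
  rw [Fintype.card_subtype]
  have h : (Finset.univ.filter (fun c : F => c ≠ 0 ∧ c ≠ 1)) = Finset.univ \ {0, 1} := by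
    ext c; simp
  rw [h, Finset.card_sdiff_of_subset (Finset.subset_univ _), Finset.card_pair (zero_ne_one),
    Finset.card_univ, hqcard]

theorem tester (q : ℕ)
    (hq : 2 < q) (n m k : ℕ) (hm : 4 ≤ m) (hk : k = m / 2)
    (N : ℕ) (hsize : m ≤ N)
    (hmain : N.choose k * (q-1)^(k-2) * (q-2) ≤ q^n) :
    (N : ℝ) ≤ (k : ℝ) * (q : ℝ) ^ ((n : ℝ) / (k : ℝ)) /
      (((q : ℝ) - 1) ^ ((1 : ℝ) - 2 / (k : ℝ)) * ((q : ℝ) - 2) ^ ((1 : ℝ) / (k : ℝ))) := by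
  have hk2 : 2 ≤ k := by omega
  have hkN : k ≤ N := by omega
  -- natural number inequality
  have hNpow : N ^ k * ((q-1)^(k-2) * (q-2)) ≤ k^k * q^n := by
    calc N ^ k * ((q-1)^(k-2) * (q-2))
        ≤ (k^k * N.choose k) * ((q-1)^(k-2) * (q-2)) :=
          Nat.mul_le_mul_right _ (aux_pow_le_choose k N hkN)
      _ = k^k * (N.choose k * (q-1)^(k-2) * (q-2)) := by ring
      _ ≤ k^k * q^n := Nat.mul_le_mul_left _ hmain
  -- positivity facts
  have hq0 : (0:ℝ) < q := by
    have : (2:ℝ) < q := by exact_mod_cast hq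
    linarith
  have hq1 : (0:ℝ) < (q:ℝ) - 1 := by
    have : (2:ℝ) < q := by exact_mod_cast hq
    linarith
  have hq2 : (0:ℝ) < (q:ℝ) - 2 := by
    have : (2:ℝ) < q := by exact_mod_cast hq
    linarith
  have hK0 : (0:ℝ) < (k:ℝ) := by
    have : (2:ℕ) ≤ k := hk2
    exact_mod_cast lt_of_lt_of_le (by norm_num : (0:ℕ) < 2) hk2
  have hKne : (k:ℝ) ≠ 0 := ne_of_gt hK0
  -- real version of the inequality
  have hreal : (N:ℝ)^k * (((q:ℝ)-1)^(k-2) * ((q:ℝ)-2)) ≤ (k:ℝ)^k * (q:ℝ)^n := by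
    have hcast := (Nat.cast_le (α := ℝ)).mpr hNpow
    push_cast at hcast
    rw [Nat.cast_sub (by omega : 1 ≤ q), Nat.cast_sub (by omega : 2 ≤ q)] at hcast
    push_cast at hcast
    convert hcast using 2
  -- the target quantity
  set T : ℝ := (k : ℝ) * (q : ℝ) ^ ((n : ℝ) / (k : ℝ)) /
      (((q : ℝ) - 1) ^ ((1 : ℝ) - 2 / (k : ℝ)) * ((q : ℝ) - 2) ^ ((1 : ℝ) / (k : ℝ))) with hT
  have hTpos : 0 < T := by
    rw [hT]
    have h1 : (0:ℝ) < (q : ℝ) ^ ((n : ℝ) / (k : ℝ)) := Real.rpow_pos_of_pos hq0 _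
    have h2 : (0:ℝ) < ((q : ℝ) - 1) ^ ((1 : ℝ) - 2 / (k : ℝ)) := Real.rpow_pos_of_pos hq1 _
    have h3 : (0:ℝ) < ((q : ℝ) - 2) ^ ((1 : ℝ) / (k : ℝ)) := Real.rpow_pos_of_pos hq2 _
    positivity
  -- compute T^k
  have hTk : T ^ k = (k:ℝ)^k * (q:ℝ)^n / (((q:ℝ)-1)^(k-2) * ((q:ℝ)-2)) := by
    rw [hT, div_pow, mul_pow, mul_pow]
    have e1 : ((q:ℝ) ^ ((n : ℝ) / (k : ℝ))) ^ k = (q:ℝ)^n := by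
      rw [← Real.rpow_natCast ((q:ℝ) ^ ((n : ℝ) / (k : ℝ))) k, ← Real.rpow_mul hq0.le,
        div_mul_cancel₀ _ hKne, Real.rpow_natCast]
    have e2 : (((q:ℝ) - 1) ^ ((1 : ℝ) - 2 / (k : ℝ))) ^ k = ((q:ℝ)-1)^(k-2) := by
      rw [← Real.rpow_natCast (((q:ℝ) - 1) ^ ((1 : ℝ) - 2 / (k : ℝ))) k,
        ← Real.rpow_mul hq1.le]
      have : ((1 : ℝ) - 2 / (k : ℝ)) * (k:ℝ) = ((k - 2 : ℕ) : ℝ) := by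
        rw [Nat.cast_sub (by omega : 2 ≤ k)]
        push_cast
        field_simp
      rw [this, Real.rpow_natCast]
    have e3 : (((q:ℝ) - 2) ^ ((1 : ℝ) / (k : ℝ))) ^ k = (q:ℝ)-2 := by
      rw [← Real.rpow_natCast (((q:ℝ) - 2) ^ ((1 : ℝ) / (k : ℝ))) k,
        ← Real.rpow_mul hq2.le, one_div, inv_mul_cancel₀ hKne, Real.rpow_one]
    rw [e1, e2, e3]
  -- conclude
  have hpow : (N:ℝ) ^ k ≤ T ^ k := by
    rw [hTk, le_div_iff₀ (by positivity)]
    exact hreal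
  exact le_of_pow_le_pow_left₀ (by omega) hTpos.le hpow


theorem stmt6 (F : Type*) [Field F] [Fintype F] (q : ℕ) (hqcard : Fintype.card F = q)
    (hq : 2 < q) (n m k : ℕ) (hm : 4 ≤ m) (hk : k = m / 2)
    (A : Set (Fin n → F)) (hsize : m ≤ A.ncard) (hA : IsMGeneral F m A) :
    (A.ncard : ℝ) ≤ (k : ℝ) * (q : ℝ) ^ ((n : ℝ) / (k : ℝ)) /
      (((q : ℝ) - 1) ^ ((1 : ℝ) - 2 / (k : ℝ)) * ((q : ℝ) - 2) ^ ((1 : ℝ) / (k : ℝ))) := by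
  classical
  have hk2 : 2 ≤ k := by omega
  have hkm : 2 * k ≤ m := by omega
  have hfin : A.Finite := Set.toFinite A
  have hBsub : ↑hfin.toFinset ⊆ A := fun x hx => hfin.mem_toFinset.mp hx
  have hBcard : hfin.toFinset.card = A.ncard := (Set.ncard_eq_toFinset_card A hfin).symm
  have hinj := theta_inj hA hsize hk2 hkm hfin.toFinset hBsub
  have hle := Fintype.card_le_of_injective _ hinj
  rw [Fintype.card_prod, Fintype.card_prod, Fintype.card_fun, Fintype.card_coe,
    Finset.card_powersetCard, card_ne_zero_sub hqcard, card_ne01 hqcard, Fintype.card_fin,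
    hBcard, Fintype.card_fun, Fintype.card_fin, hqcard] at hle
  exact tester q hq n m k hm hk A.ncard hsize (by rw [mul_assoc]; exact hle)
end

section
/- Let m ≥ 4 and set k = ⌊m/2⌋. If A is an m-general set in F_2^n, then |A| ≤ (k!)^(1/k) · 2^(n/k) + k. -/
theorem stmt7 (n m k : ℕ) (hm : 4 ≤ m) (hk : k = m / 2)
    (A : Set (Fin n → ZMod 2)) (hsize : m ≤ A.ncard) (hA : IsMGeneral (ZMod 2) m A) :
    (A.ncard : ℝ) ≤ ((k.factorial : ℝ)) ^ ((1 : ℝ) / (k : ℝ)) * (2 : ℝ) ^ ((n : ℝ) / (k : ℝ)) + (k : ℝ) := by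
  classical
  have hk2 : 2 ≤ k := by omega
  have hAfin : A.Finite := A.toFinite
  set T := hAfin.toFinset with hTdef
  have hTA : (↑T : Set (Fin n → ZMod 2)) = A := hAfin.coe_toFinset
  have hcardT : T.card = A.ncard := (Set.ncard_eq_toFinset_card A hAfin).symm
  have hchar : ∀ v : Fin n → ZMod 2, v + v = 0 := by
    intro v; funext i; exact CharTwo.add_self_eq_zero _
  -- injectivity of k-subset sums
  have hinj : Set.InjOn (fun S : Finset (Fin n → ZMod 2) => ∑ x ∈ S, x)
      ↑(T.powersetCard k) := by
    rintro S hS Tt hTt hsum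
    simp only [Finset.mem_coe, Finset.mem_powersetCard] at hS hTt
    simp only [] at hsum
    obtain ⟨hST, hScard⟩ := hS
    obtain ⟨hTtT, hTtcard⟩ := hTt
    by_contra hne
    set D := (S \ Tt) ∪ (Tt \ S) with hDdef
    have hdisj : Disjoint (S \ Tt) (Tt \ S) := disjoint_sdiff_sdiff
    have hiS : S ∩ Tt ⊆ S := Finset.inter_subset_left
    have hiT : Tt ∩ S ⊆ Tt := Finset.inter_subset_left
    have hcS : (S \ Tt).card = k - (S ∩ Tt).card := by
      rw [← Finset.sdiff_inter_self_left S Tt, Finset.card_sdiff_of_subset hiS, hScard]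
    have hcT : (Tt \ S).card = k - (S ∩ Tt).card := by
      rw [← Finset.sdiff_inter_self_left Tt S, Finset.card_sdiff_of_subset hiT, hTtcard,
        Finset.inter_comm]
    set a := k - (S ∩ Tt).card with hadef
    have hcardD : D.card = a + a := by
      rw [hDdef, Finset.card_union_of_disjoint hdisj, hcS, hcT]
    have hDsubT : D ⊆ T :=
      Finset.union_subset ((Finset.sdiff_subset).trans hST) ((Finset.sdiff_subset).trans hTtT)
    have hDm : D.card ≤ m := by
      have : a ≤ k := Nat.sub_le _ _
      omega
    have hDne : D.Nonempty := by
      rw [Finset.nonempty_iff_ne_empty]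
      intro h
      have h1 : S \ Tt = ∅ ∧ Tt \ S = ∅ := by
        constructor <;> [exact Finset.union_eq_empty.mp h |>.1;
          exact Finset.union_eq_empty.mp h |>.2]
      exact hne (Finset.Subset.antisymm (Finset.sdiff_eq_empty_iff_subset.mp h1.1)
        (Finset.sdiff_eq_empty_iff_subset.mp h1.2))
    have hsumD : ∑ x ∈ D, x = 0 := by
      rw [hDdef, Finset.sum_union hdisj]
      have e1 : ∑ x ∈ S \ Tt, x = ∑ x ∈ S, x - ∑ x ∈ S ∩ Tt, x := by
        rw [← Finset.sdiff_inter_self_left S Tt, Finset.sum_sdiff_eq_sub hiS]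
      have e2 : ∑ x ∈ Tt \ S, x = ∑ x ∈ S, x - ∑ x ∈ S ∩ Tt, x := by
        rw [← Finset.sdiff_inter_self_left Tt S, Finset.sum_sdiff_eq_sub hiT,
          Finset.inter_comm, ← hsum]
      rw [e1, e2]
      have := hchar (∑ x ∈ S, x - ∑ x ∈ S ∩ Tt, x)
      linear_combination this
    -- extend D to an m-element subset of T
    obtain ⟨E, hDE, hET, hEcard⟩ :=
      Finset.exists_subsuperset_card_eq hDsubT hDm (by rw [hcardT]; exact hsize)
    have hEA : (↑E : Set (Fin n → ZMod 2)) ⊆ A := by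
      rw [← hTA]; exact_mod_cast hET
    have hAI := hA E hEA hEcard
    have key := affineIndependent_iff.mp hAI E.attach
      (fun e => if (e : Fin n → ZMod 2) ∈ D then 1 else 0)
    have hDinter : E ∩ D = D := Finset.inter_eq_right.mpr hDE
    have hw0 : ∑ e ∈ E.attach, (if (e : Fin n → ZMod 2) ∈ D then (1 : ZMod 2) else 0) = 0 := by
      rw [Finset.sum_attach E (fun x => if x ∈ D then (1 : ZMod 2) else 0),
        Finset.sum_ite_mem, hDinter, Finset.sum_const, hcardD]
      simp only [nsmul_eq_mul, mul_one]
      push_cast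
      exact CharTwo.add_self_eq_zero _
    have hw1 : ∑ e ∈ E.attach,
        (if (e : Fin n → ZMod 2) ∈ D then (1 : ZMod 2) else 0) • (e : Fin n → ZMod 2) = 0 := by
      have : ∀ x : Fin n → ZMod 2,
          (if x ∈ D then (1 : ZMod 2) else 0) • x = if x ∈ D then x else 0 := by
        intro x; split <;> simp
      calc ∑ e ∈ E.attach, (if (e : Fin n → ZMod 2) ∈ D then (1 : ZMod 2) else 0)
            • (e : Fin n → ZMod 2)
          = ∑ e ∈ E.attach, (if (e : Fin n → ZMod 2) ∈ D then (e : Fin n → ZMod 2) else 0) := by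
            exact Finset.sum_congr rfl fun e _ => this _
        _ = ∑ x ∈ E, (if x ∈ D then x else 0) :=
            Finset.sum_attach E (fun x => if x ∈ D then x else 0)
        _ = ∑ x ∈ E ∩ D, x := Finset.sum_ite_mem _ _ _
        _ = 0 := by rw [hDinter, hsumD]
    obtain ⟨d, hd⟩ := hDne
    have hdE : d ∈ E := hDE hd
    have := key hw0 hw1 ⟨d, hdE⟩ (Finset.mem_attach _ _)
    simp only [hd, if_true] at this
    exact one_ne_zero this
  -- counting
  have hchoose : A.ncard.choose k ≤ 2 ^ n := by
    have h1 : (T.powersetCard k).card ≤ (Finset.univ : Finset (Fin n → ZMod 2)).card :=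
      Finset.card_le_card_of_injOn _ (fun _ _ => Finset.mem_univ _) hinj
    rw [Finset.card_powersetCard, hcardT, Finset.card_univ] at h1
    simpa [ZMod.card] using h1
  have hN : k ≤ A.ncard := le_trans (by omega) hsize
  have hnat : (A.ncard - k) ^ k ≤ k.factorial * 2 ^ n :=
    calc (A.ncard - k) ^ k ≤ (A.ncard + 1 - k) ^ k := Nat.pow_le_pow_left (by omega) k
      _ ≤ A.ncard.descFactorial k := Nat.pow_sub_le_descFactorial _ _
      _ = k.factorial * A.ncard.choose k := Nat.descFactorial_eq_factorial_mul_choose _ _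
      _ ≤ k.factorial * 2 ^ n := Nat.mul_le_mul_left _ hchoose
  have hkR : (0 : ℝ) < k := by exact_mod_cast (by omega : 0 < k)
  have hcast : ((A.ncard : ℝ) - (k : ℝ)) ^ k ≤ (k.factorial : ℝ) * 2 ^ n := by
    have h := (Nat.cast_le (α := ℝ)).2 hnat
    rw [Nat.cast_pow, Nat.cast_sub hN, Nat.cast_mul, Nat.cast_pow] at h
    exact_mod_cast h
  have hx0 : (0 : ℝ) ≤ (A.ncard : ℝ) - k := by
    have : (k : ℝ) ≤ (A.ncard : ℝ) := by exact_mod_cast hN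
    linarith
  have hroot : (A.ncard : ℝ) - k ≤ ((k.factorial : ℝ) * 2 ^ n) ^ ((1 : ℝ) / k) := by
    have h1 : ((((A.ncard : ℝ) - k) ^ k : ℝ)) ^ ((1 : ℝ) / k)
        ≤ ((k.factorial : ℝ) * 2 ^ n) ^ ((1 : ℝ) / k) :=
      Real.rpow_le_rpow (pow_nonneg hx0 k) hcast (by positivity)
    rwa [← Real.rpow_natCast ((A.ncard : ℝ) - k) k, ← Real.rpow_mul hx0, mul_one_div,
      div_self (ne_of_gt hkR), Real.rpow_one] at h1
  have hsplit : ((k.factorial : ℝ) * 2 ^ n) ^ ((1 : ℝ) / k)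
      = (k.factorial : ℝ) ^ ((1 : ℝ) / k) * 2 ^ ((n : ℝ) / k) := by
    rw [Real.mul_rpow (by positivity) (by positivity), ← Real.rpow_natCast (2 : ℝ) n,
      ← Real.rpow_mul (by norm_num), mul_one_div]
  rw [hsplit] at hroot
  linarith
end

section
/- Let k ≥ 2 and let A be a 2k-general set in F_q^n with q > 2. Fix a nonzero γ in F_q and a linear order on A. Then the map sending a pair ((α_1,...,α_k), (a_1 < a_2 < ... < a_k)) — where the α_i are nonzero elements of F_q summing to γ and the a_i are distinct elements of A listed in increasing order — to α_1 a_1 + ... + α_k a_k ∈ F_q^n is injective. -/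
theorem stmt10 (F : Type*) [Field F] [Fintype F] (hq : 2 < Fintype.card F)
    (n k : ℕ) (hk : 2 ≤ k) (A : Set (Fin n → F)) (hsize : 2 * k ≤ A.ncard)
    (hA : IsMGeneral F (2 * k) A) (γ : F) (hγ : γ ≠ 0)
    (r : LinearOrder (Fin n → F)) :
    ∀ α β : Fin k → F, ∀ a b : Fin k → (Fin n → F),
      (∀ i, α i ≠ 0) → (∑ i, α i = γ) → (∀ i, a i ∈ A) →
      (∀ i j : Fin k, i < j → r.lt (a i) (a j)) →
      (∀ i, β i ≠ 0) → (∑ i, β i = γ) → (∀ i, b i ∈ A) →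
      (∀ i j : Fin k, i < j → r.lt (b i) (b j)) →
      ∑ i, α i • a i = ∑ i, β i • b i →
      α = β ∧ a = b := by
  letI : LinearOrder (Fin n → F) := r
  classical
  intro α β a b hα hαsum ha hamono hβ hβsum hb hbmono heq
  have hamono' : StrictMono a := fun i j h => hamono i j h
  have hbmono' : StrictMono b := fun i j h => hbmono i j h
  have hainj : Function.Injective a := hamono'.injective
  have hbinj : Function.Injective b := hbmono'.injective
  set S : Finset (Fin n → F) :=
    (Finset.image a Finset.univ) ∪ (Finset.image b Finset.univ) with hS
  have hAfin : A.Finite := Set.toFinite A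
  have hScard : S.card ≤ 2 * k := by
    calc S.card ≤ (Finset.image a Finset.univ).card + (Finset.image b Finset.univ).card :=
          Finset.card_union_le _ _
      _ ≤ Finset.univ.card + Finset.univ.card :=
          Nat.add_le_add (Finset.card_image_le) (Finset.card_image_le)
      _ = 2 * k := by simp [Fintype.card_fin, two_mul]
  have hSA : S ⊆ hAfin.toFinset := by
    intro x hx
    rw [Set.Finite.mem_toFinset]
    rcases Finset.mem_union.1 hx with h | h
    · obtain ⟨i, _, rfl⟩ := Finset.mem_image.1 h; exact ha i
    · obtain ⟨i, _, rfl⟩ := Finset.mem_image.1 h; exact hb i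
  obtain ⟨T, hST, hTA, hTcard⟩ :=
    Finset.exists_subsuperset_card_eq hSA hScard
      (by rwa [← Set.ncard_eq_toFinset_card A hAfin])
  have hTsub : ↑T ⊆ A := by
    intro x hx; exact (Set.Finite.mem_toFinset hAfin).1 (hTA hx)
  have hTindep : AffineIndependent F (fun x : T => (x : Fin n → F)) :=
    hA T hTsub hTcard
  -- weight function
  set w : (Fin n → F) → F := fun x =>
    (∑ i ∈ Finset.univ.filter (fun i => a i = x), α i)
      - (∑ i ∈ Finset.univ.filter (fun i => b i = x), β i) with hw
  have haT : ∀ i, a i ∈ T := fun i =>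
    hST (Finset.mem_union_left _ (Finset.mem_image_of_mem a (Finset.mem_univ i)))
  have hbT : ∀ i, b i ∈ T := fun i =>
    hST (Finset.mem_union_right _ (Finset.mem_image_of_mem b (Finset.mem_univ i)))
  have hsum0 : ∑ x ∈ T, w x = 0 := by
    simp only [hw, Finset.sum_sub_distrib]
    rw [Finset.sum_fiberwise_of_maps_to (fun i _ => haT i) α,
      Finset.sum_fiberwise_of_maps_to (fun i _ => hbT i) β, hαsum, hβsum, sub_self]
  have hsmul0 : ∑ x ∈ T, w x • x = 0 := by
    have h1 : ∑ x ∈ T, (∑ i ∈ Finset.univ.filter (fun i => a i = x), α i) • x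
        = ∑ i, α i • a i := by
      rw [← Finset.sum_fiberwise_of_maps_to (fun i _ => haT i) (fun i => α i • a i)]
      refine Finset.sum_congr rfl fun x _ => ?_
      rw [Finset.sum_smul]
      refine Finset.sum_congr rfl fun i hi => ?_
      rw [(Finset.mem_filter.1 hi).2]
    have h2 : ∑ x ∈ T, (∑ i ∈ Finset.univ.filter (fun i => b i = x), β i) • x
        = ∑ i, β i • b i := by
      rw [← Finset.sum_fiberwise_of_maps_to (fun i _ => hbT i) (fun i => β i • b i)]
      refine Finset.sum_congr rfl fun x _ => ?_
      rw [Finset.sum_smul]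
      refine Finset.sum_congr rfl fun i hi => ?_
      rw [(Finset.mem_filter.1 hi).2]
    simp only [hw, sub_smul, Finset.sum_sub_distrib, h1, h2, heq, sub_self]
  -- transport affine independence statement
  have hwzero : ∀ x ∈ T, w x = 0 := by
    have := affineIndependent_iff.1 hTindep T.attach (fun x => w ↑x)
      (by rwa [Finset.sum_attach T (fun x => w x)])
      (by rwa [Finset.sum_attach T (fun x => w x • x)])
    intro x hx
    exact this ⟨x, hx⟩ (Finset.mem_attach _ _)
  have hafiber : ∀ i, Finset.univ.filter (fun j => a j = a i) = {i} := by
    intro i; ext j; simp [hainj.eq_iff]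
  have hbfiber : ∀ i, Finset.univ.filter (fun j => b j = b i) = {i} := by
    intro i; ext j; simp [hbinj.eq_iff]
  -- ranges coincide
  have hrangeab : ∀ i, ∃ j, b j = a i := by
    intro i
    by_contra h
    push_neg at h
    have hempty : Finset.univ.filter (fun j => b j = a i) = ∅ := by
      ext j; simp [h j]
    have := hwzero (a i) (haT i)
    rw [hw] at this
    simp only [hafiber i, hempty, Finset.sum_singleton, Finset.sum_empty, sub_zero] at this
    exact hα i this
  have hrangeba : ∀ j, ∃ i, a i = b j := by
    intro j
    by_contra h
    push_neg at h
    have hempty : Finset.univ.filter (fun i => a i = b j) = ∅ := by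
      ext i; simp [h i]
    have := hwzero (b j) (hbT j)
    rw [hw] at this
    simp only [hbfiber j, hempty, Finset.sum_singleton, Finset.sum_empty, zero_sub,
      neg_eq_zero] at this
    exact hβ j this
  have hrange : Finset.image a Finset.univ = Finset.image b Finset.univ := by
    ext x
    simp only [Finset.mem_image, Finset.mem_univ, true_and]
    constructor
    · rintro ⟨i, rfl⟩; exact hrangeab i
    · rintro ⟨j, rfl⟩; exact hrangeba j
  have hacard : (Finset.image a Finset.univ).card = k := by
    rw [Finset.card_image_of_injective _ hainj, Finset.card_univ, Fintype.card_fin]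
  have haeq : a = (Finset.image a Finset.univ).orderEmbOfFin hacard :=
    Finset.orderEmbOfFin_unique hacard
      (fun i => Finset.mem_image_of_mem a (Finset.mem_univ i)) hamono'
  have hbeq : b = (Finset.image a Finset.univ).orderEmbOfFin hacard :=
    Finset.orderEmbOfFin_unique hacard
      (fun i => by rw [hrange]; exact Finset.mem_image_of_mem b (Finset.mem_univ i)) hbmono'
  have hab : a = b := haeq.trans hbeq.symm
  refine ⟨?_, hab⟩
  funext i
  have := hwzero (a i) (haT i)
  rw [hw] at this
  have hbfiber' : Finset.univ.filter (fun j => b j = a i) = {i} := by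
    rw [hab]; exact hbfiber i
  simp only [hafiber i, hbfiber', Finset.sum_singleton] at this
  exact sub_eq_zero.1 this
end

section
/- If A is a 2k-general set in F_2^n, then all sums of k distinct elements of A are distinct: the map sending a k-element subset S of A to the sum of its elements is injective. Consequently, C(|A|, k) ≤ 2^n. -/
theorem stmt11 (n k : ℕ) (hk : 1 ≤ k) (A : Finset (Fin n → ZMod 2))
    (hsize : 2 * k ≤ A.card) (hA : IsMGeneral (ZMod 2) (2 * k) (↑A : Set (Fin n → ZMod 2))) :
    (∀ s t : Finset (Fin n → ZMod 2), s ⊆ A → t ⊆ A → s.card = k → t.card = k →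
      ∑ x ∈ s, x = ∑ x ∈ t, x → s = t) ∧
    Nat.choose A.card k ≤ 2 ^ n := by
  have main : ∀ s t : Finset (Fin n → ZMod 2), s ⊆ A → t ⊆ A → s.card = k → t.card = k →
      ∑ x ∈ s, x = ∑ x ∈ t, x → s = t := by
    intro s t hs ht hsc htc hsum
    by_contra hne
    -- symmetric difference
    set u : Finset (Fin n → ZMod 2) := (s \ t) ∪ (t \ s) with hu
    have hdisj : Disjoint (s \ t) (t \ s) := disjoint_sdiff_sdiff
    have huA : u ⊆ A := by
      intro x hx
      rcases Finset.mem_union.1 hx with h | h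
      · exact hs (Finset.mem_sdiff.1 h).1
      · exact ht (Finset.mem_sdiff.1 h).1
    have hune : u.Nonempty := by
      rcases Finset.eq_empty_or_nonempty u with h | h
      · exfalso
        rw [hu, Finset.union_eq_empty, Finset.sdiff_eq_empty_iff_subset,
          Finset.sdiff_eq_empty_iff_subset] at h
        exact hne (Finset.Subset.antisymm h.1 h.2)
      · exact h
    -- sum over u is 0
    have hsum0 : ∑ x ∈ u, x = 0 := by
      have h1 : ∑ x ∈ s, x = ∑ x ∈ s \ t, x + ∑ x ∈ s ∩ t, x := by
        rw [← Finset.sum_union (Finset.disjoint_sdiff_inter s t),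
          Finset.sdiff_union_inter]
      have h2 : ∑ x ∈ t, x = ∑ x ∈ t \ s, x + ∑ x ∈ s ∩ t, x := by
        rw [Finset.inter_comm s t, ← Finset.sum_union (Finset.disjoint_sdiff_inter t s),
          Finset.sdiff_union_inter]
      have := hsum
      rw [h1, h2] at this
      have h3 : ∑ x ∈ s \ t, x = ∑ x ∈ t \ s, x := by
        exact add_right_cancel this
      rw [hu, Finset.sum_union hdisj, h3]
      funext i
      simp only [Pi.add_apply, Pi.zero_apply]
      exact (CharTwo.add_self_eq_zero _)
    -- cardinality of u
    have hcard2 : 2 ∣ u.card := by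
      rw [hu, Finset.card_union_of_disjoint hdisj]
      have e1 := Finset.card_sdiff_add_card_inter s t
      have e2 := Finset.card_sdiff_add_card_inter t s
      rw [Finset.inter_comm t s] at e2
      omega
    have hule : u.card ≤ 2 * k := by
      calc u.card ≤ (s \ t).card + (t \ s).card := Finset.card_union_le _ _
        _ ≤ s.card + t.card := by
            gcongr <;> exact Finset.sdiff_subset
        _ = 2 * k := by rw [hsc, htc]; ring
    -- extend u to a set T of size 2k
    obtain ⟨T, huT, hTA, hTcard⟩ := Finset.exists_subsuperset_card_eq huA hule hsize
    have hTind := hA T (by exact_mod_cast hTA) hTcard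
    rw [affineIndependent_iff] at hTind
    -- define the weight function
    set w : T → ZMod 2 := fun x => if (x : Fin n → ZMod 2) ∈ u then 1 else 0 with hw
    have hfil : T.filter (· ∈ u) = u := by
      rw [Finset.filter_mem_eq_inter, Finset.inter_eq_right.mpr huT]
    have hw0 : ∑ e ∈ Finset.univ, w e = 0 := by
      rw [hw, Finset.univ_eq_attach]
      rw [Finset.sum_attach T (fun x => if x ∈ u then (1 : ZMod 2) else 0)]
      rw [← Finset.sum_filter, hfil]
      simp only [Finset.sum_const, nsmul_eq_mul, mul_one]
      obtain ⟨c, hc⟩ := hcard2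
      rw [hc]
      push_cast
      rw [show ((2 : ZMod 2)) = 0 from rfl]
      ring
    have hws : ∑ e ∈ Finset.univ, w e • (e : Fin n → ZMod 2) = 0 := by
      rw [hw, Finset.univ_eq_attach]
      rw [Finset.sum_attach T (fun x => (if x ∈ u then (1 : ZMod 2) else 0) • x)]
      have : ∀ x ∈ T, (if x ∈ u then (1 : ZMod 2) else 0) • x
          = if x ∈ u then x else 0 := by
        intro x _; split <;> simp
      rw [Finset.sum_congr rfl this, ← Finset.sum_filter, hfil, hsum0]
    obtain ⟨x, hx⟩ := hune
    have hxT : x ∈ T := huT hx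
    have := hTind Finset.univ w hw0 hws ⟨x, hxT⟩ (Finset.mem_univ _)
    rw [hw] at this
    simp only [hx, if_true] at this
    exact one_ne_zero this
  refine ⟨main, ?_⟩
  have hinj : Set.InjOn (fun s : Finset (Fin n → ZMod 2) => ∑ x ∈ s, x)
      ↑(A.powersetCard k) := by
    intro s hs t ht hst
    simp only [Finset.mem_coe, Finset.mem_powersetCard] at hs ht
    exact main s t hs.1 ht.1 hs.2 ht.2 hst
  calc Nat.choose A.card k = (A.powersetCard k).card := (Finset.card_powersetCard k A).symm
    _ ≤ Finset.univ.card := Finset.card_le_card_of_injOn _ (fun _ _ => Finset.mem_univ _) hinj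
    _ = 2 ^ n := by simp [Fintype.card_fun]
end

section
/- The cube function f(x) = x^3 on F_{2^t} is almost perfect nonlinear: for all a, b in F_{2^t} with a ≠ 0, the equation (x+a)^3 + x^3 = b has at most two solutions x. -/
open Polynomial

theorem stmt14 (K : Type*) [Field K] [Fintype K] (t : ℕ) (ht : 0 < t)
    (hcard : Fintype.card K = 2 ^ t) :
    ∀ a b : K, a ≠ 0 → Set.ncard {x : K | (x + a) ^ 3 + x ^ 3 = b} ≤ 2 := by
  -- characteristic 2
  have h2 : (2 : K) = 0 := by
    obtain ⟨n, hp, h⟩ := FiniteField.card K (ringChar K)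
    have : ringChar K ^ (n : ℕ) = 2 ^ t := by rw [← h, hcard]
    have hr2 : ringChar K = 2 := by
      have hdvd : ringChar K ∣ 2 ^ t := this ▸ dvd_pow_self _ n.pos.ne'
      exact (Nat.prime_dvd_prime_iff_eq hp Nat.prime_two).mp
        (Nat.Prime.dvd_of_dvd_pow hp hdvd)
    have := ringChar.Nat.cast_ringChar (R := K)
    rw [hr2] at this; exact_mod_cast this
  classical
  intro a b ha
  set q : K[X] := C a * X ^ 2 + C (a ^ 2) * X + C (a ^ 3 + b) with hq
  have hqne : q ≠ 0 := by
    intro h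
    have h2' : q.coeff 2 = a := by
      simp [hq, coeff_X_pow, coeff_C, -map_pow]
    rw [h] at h2'
    simp at h2'
    exact ha h2'.symm
  have hdeg : q.natDegree ≤ 2 := by
    apply natDegree_le_iff_coeff_eq_zero.mpr
    intro m hm
    simp [hq, coeff_X_pow, coeff_X, coeff_C, -map_pow, show m ≠ 2 by omega,
      show (1:ℕ) ≠ m by omega, show m ≠ 0 by omega, show m ≠ 1 by omega]
  have hsub : {x : K | (x + a) ^ 3 + x ^ 3 = b} ⊆ ↑q.roots.toFinset := by
    intro x hx
    simp only [Set.mem_setOf_eq] at hx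
    simp only [Multiset.mem_toFinset, mem_roots hqne, IsRoot.def, Finset.coe_sort_coe,
      Finset.mem_coe]
    simp only [hq, eval_add, eval_mul, eval_pow, eval_C, eval_X]
    linear_combination hx + (b - x ^ 3 - a * x ^ 2 - a ^ 2 * x) * h2
  calc Set.ncard {x : K | (x + a) ^ 3 + x ^ 3 = b} ≤ q.roots.toFinset.card := by
        have := Set.ncard_le_ncard hsub (Set.toFinite _)
        simpa using this
    _ ≤ Multiset.card q.roots := q.roots.toFinset_card_le
    _ ≤ q.natDegree := q.card_roots' 
    _ ≤ 2 := hdeg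
end

section
/- For every even positive integer n, there exists a 4-general set in F_2^n of size 2^(n/2). Consequently, for all n ≥ 2, r_4(n,2) ≥ 2^(⌊n/2⌋) ≥ (1/√2) · 2^(n/2), where r_4(n,2) denotes the maximum size of a 4-general set in F_2^n. -/
open Module

/-- `r₄(n, 2)`: the maximum size of a 4-general set in `𝔽₂ⁿ`. -/
noncomputable def r4 (n : ℕ) : ℕ :=
  sSup {N : ℕ | ∃ A : Set (Fin n → ZMod 2), IsMGeneral (ZMod 2) 4 A ∧ A.ncard = N}

lemma sidon_isMGeneral {n : ℕ} (A : Set (Fin n → ZMod 2))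
    (hA : ∀ t : Finset (Fin n → ZMod 2), ↑t ⊆ A → t.card = 4 → ∑ x ∈ t, x ≠ 0) :
    IsMGeneral (ZMod 2) 4 A := by
  intro s hs hcard
  rw [affineIndependent_iff]
  intro t w hw0 hwsum e het
  by_contra hne
  have hzm : ∀ x : ZMod 2, x ≠ 0 → x = 1 := by decide
  classical
  set u : Finset s := t.filter (fun i => w i = 1) with hu
  have hmemu : ∀ i ∈ t, w i ≠ 0 → i ∈ u := fun i hi h =>
    Finset.mem_filter.2 ⟨hi, hzm _ h⟩
  have heu : e ∈ u := hmemu e het hne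
  have hsplit : ∑ i ∈ t, w i = (u.card : ZMod 2) := by
    rw [← Finset.sum_filter_add_sum_filter_not t (fun i => w i = 1)]
    have h1 : ∑ i ∈ t.filter (fun i => w i = 1), w i = (u.card : ZMod 2) := by
      rw [Finset.sum_congr rfl (fun i hi => (Finset.mem_filter.1 hi).2)]
      simp [hu]
    have h2 : ∑ i ∈ t.filter (fun i => ¬ w i = 1), w i = 0 := by
      refine Finset.sum_eq_zero fun i hi => ?_
      rcases Finset.mem_filter.1 hi with ⟨-, h⟩
      by_contra h0
      exact h (hzm _ h0)
    rw [h1, h2, add_zero]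
  have hcard2 : (2 : ℕ) ∣ u.card := by
    have := hw0
    rw [hsplit] at this
    exact (ZMod.natCast_eq_zero_iff _ 2).1 this
  have hsum : ∑ i ∈ u, (i : Fin n → ZMod 2) = 0 := by
    rw [← hwsum, ← Finset.sum_filter_add_sum_filter_not t (fun i => w i = 1)]
    have h1 : ∑ i ∈ t.filter (fun i => w i = 1), w i • (i : Fin n → ZMod 2)
        = ∑ i ∈ u, (i : Fin n → ZMod 2) := by
      refine Finset.sum_congr rfl fun i hi => ?_
      rw [(Finset.mem_filter.1 hi).2, one_smul]
    have h2 : ∑ i ∈ t.filter (fun i => ¬ w i = 1), w i • (i : Fin n → ZMod 2) = 0 := by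
      refine Finset.sum_eq_zero fun i hi => ?_
      rcases Finset.mem_filter.1 hi with ⟨-, h⟩
      have : w i = 0 := by by_contra h0; exact h (hzm _ h0)
      rw [this, zero_smul]
    rw [h1, h2, add_zero]
  have hinj : Function.Injective (fun i : s => (i : Fin n → ZMod 2)) := Subtype.val_injective
  set v : Finset (Fin n → ZMod 2) := u.image (fun i : s => (i : Fin n → ZMod 2)) with hv
  have hvcard : v.card = u.card := Finset.card_image_of_injective _ hinj
  have hvsum : ∑ x ∈ v, x = 0 := by
    rw [hv, Finset.sum_image (fun a _ b _ h => hinj h)]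
    exact hsum
  have hvsubA : ↑v ⊆ A := by
    intro x hx
    rcases Finset.mem_image.1 hx with ⟨i, -, rfl⟩
    exact hs i.2
  have hule : u.card ≤ 4 := by
    calc u.card ≤ Fintype.card s := Finset.card_le_univ u
    _ = 4 := by rw [Fintype.card_coe, hcard]
  have hupos : 0 < u.card := Finset.card_pos.2 ⟨e, heu⟩
  have : u.card = 2 ∨ u.card = 4 := by omega
  rcases this with h2 | h4
  · rcases Finset.card_eq_two.1 (hvcard.trans h2) with ⟨a, b, hab, hvab⟩
    have : a + b = 0 := by rw [hvab, Finset.sum_pair hab] at hvsum; exact hvsum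
    have hb : -b = b := funext fun i => CharTwo.neg_eq (b i)
    exact hab ((eq_neg_of_add_eq_zero_left this).trans hb)
  · exact hA v hvsubA (hvcard.trans h4) hvsum

lemma finset_card_four {α : Type*} [DecidableEq α] {t : Finset α} (h : t.card = 4) :
    ∃ a b c d : α, a ≠ b ∧ a ≠ c ∧ a ≠ d ∧ b ≠ c ∧ b ≠ d ∧ c ≠ d ∧ t = {a, b, c, d} := by
  rcases Finset.card_eq_succ.1 h with ⟨a, u, hau, rfl, hu3⟩
  rcases Finset.card_eq_three.1 hu3 with ⟨b, c, d, hbc, hbd, hcd, rfl⟩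
  refine ⟨a, b, c, d, ?_, ?_, ?_, hbc, hbd, hcd, rfl⟩ <;>
    · rintro rfl; simp at hau

lemma sum_four {M : Type*} [AddCommMonoid M] [DecidableEq M] {a b c d : M}
    (hab : a ≠ b) (hac : a ≠ c) (had : a ≠ d) (hbc : b ≠ c) (hbd : b ≠ d) (hcd : c ≠ d) :
    ∑ x ∈ ({a, b, c, d} : Finset M), x = a + b + c + d := by
  rw [Finset.sum_insert (by simp [hab, hac, had]), Finset.sum_insert (by simp [hbc, hbd]),
    Finset.sum_insert (by simp [hcd]), Finset.sum_singleton]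
  abel

lemma cube_sidon {F : Type*} [Field F] [CharP F 2]
    (t : Finset (F × F)) (ht : ↑t ⊆ Set.range (fun x : F => (x, x ^ 3)))
    (h4 : t.card = 4) : ∑ x ∈ t, x ≠ 0 := by
  classical
  intro hsum
  rcases finset_card_four h4 with ⟨p1, p2, p3, p4, h12, h13, h14, h23, h24, h34, rfl⟩
  have hmem : ∀ p ∈ ({p1, p2, p3, p4} : Finset (F × F)), ∃ x : F, p = (x, x ^ 3) := by
    intro p hp
    rcases ht hp with ⟨x, hx⟩
    exact ⟨x, hx.symm⟩
  obtain ⟨x1, rfl⟩ := hmem p1 (by simp)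
  obtain ⟨x2, rfl⟩ := hmem p2 (by simp)
  obtain ⟨x3, rfl⟩ := hmem p3 (by simp)
  obtain ⟨x4, rfl⟩ := hmem p4 (by simp)
  rw [sum_four h12 h13 h14 h23 h24 h34] at hsum
  have e1 : x1 + x2 + x3 + x4 = 0 := congrArg Prod.fst hsum
  have e2 : x1 ^ 3 + x2 ^ 3 + x3 ^ 3 + x4 ^ 3 = 0 := congrArg Prod.snd hsum
  have h2 : (2 : F) = 0 := CharTwo.two_eq_zero
  have hx4 : x4 = x1 + x2 + x3 := by linear_combination e1 - (x1 + x2 + x3) * h2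
  subst hx4
  have key : (x1 + x2) * (x2 + x3) * (x1 + x3) = 0 := by
    linear_combination e2 - (x1 ^ 3 + x2 ^ 3 + x3 ^ 3 + x1 ^ 2 * x2 + x1 ^ 2 * x3
      + x2 ^ 2 * x1 + x2 ^ 2 * x3 + x3 ^ 2 * x1 + x3 ^ 2 * x2 + 2 * x1 * x2 * x3) * h2
  have hne : ∀ a b : F, a ≠ b → a + b ≠ 0 := by
    intro a b hab h
    exact hab (by linear_combination h - b * h2)
  have hx12 : x1 ≠ x2 := fun h => h12 (by rw [h])
  have hx23 : x2 ≠ x3 := fun h => h23 (by rw [h])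
  have hx13 : x1 ≠ x3 := fun h => h13 (by rw [h])
  rcases mul_eq_zero.1 key with h | h
  · rcases mul_eq_zero.1 h with h | h
    · exact hne _ _ hx12 h
    · exact hne _ _ hx23 h
  · exact hne _ _ hx13 h

lemma main_construction {n k : ℕ} (hk : k ≠ 0) (hkn : 2 * k ≤ n) :
    ∃ A : Set (Fin n → ZMod 2), IsMGeneral (ZMod 2) 4 A ∧ A.ncard = 2 ^ k := by
  classical
  haveI : Fact (Nat.Prime 2) := ⟨Nat.prime_two⟩
  set F := GaloisField 2 k with hF
  have hfr : finrank (ZMod 2) F = k := GaloisField.finrank 2 hk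
  have hfr2 : finrank (ZMod 2) (F × F) = 2 * k := by
    rw [finrank_prod, hfr]; ring
  have hfrpi : finrank (ZMod 2) (Fin (2 * k) → ZMod 2) = 2 * k := finrank_fin_fun _
  let e : (F × F) ≃ₗ[ZMod 2] (Fin (2 * k) → ZMod 2) :=
    LinearEquiv.ofFinrankEq _ _ (hfr2.trans hfrpi.symm)
  have hkpos : 0 < 2 * k := by omega
  let g : Fin n → Fin (2 * k) := fun i => if h : (i : ℕ) < 2 * k then ⟨i, h⟩ else ⟨0, hkpos⟩
  have hg : Function.Surjective g := by
    intro j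
    refine ⟨⟨j, lt_of_lt_of_le j.2 hkn⟩, ?_⟩
    simp [g, j.2]
  let φ : (F × F) →ₗ[ZMod 2] (Fin n → ZMod 2) :=
    (LinearMap.funLeft (ZMod 2) (ZMod 2) g).comp e.toLinearMap
  have hφ : Function.Injective φ :=
    (LinearMap.funLeft_injective_of_surjective (ZMod 2) (ZMod 2) g hg).comp e.injective
  -- the Sidon set
  let S : Set (F × F) := Set.range (fun x : F => (x, x ^ 3))
  refine ⟨φ '' S, ?_, ?_⟩
  · refine sidon_isMGeneral _ ?_
    intro t ht h4 hsum
    -- pull back along φ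
    set t' : Finset (F × F) := t.preimage φ (Set.injOn_of_injective hφ) with ht'
    have himg : t'.image φ = t := by
      rw [ht', Finset.image_preimage]
      refine Finset.filter_true_of_mem fun x hx => ?_
      rcases ht hx with ⟨y, -, hy⟩
      exact ⟨y, hy⟩
    have ht'card : t'.card = 4 := by
      have := Finset.card_image_of_injective t' hφ
      rw [himg] at this
      omega
    have ht'S : ↑t' ⊆ S := by
      intro x hx
      have : φ x ∈ t := (Finset.mem_preimage).1 hx
      rcases ht this with ⟨y, hy, hyx⟩
      rwa [← hφ hyx]
    have hsum' : ∑ x ∈ t', φ x = 0 := by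
      have := Finset.sum_image (s := t') (g := φ) (f := fun x : Fin n → ZMod 2 => x)
        (fun a _ b _ h => hφ h)
      rw [himg] at this
      rw [← this]
      exact hsum
    rw [← map_sum] at hsum'
    have : (∑ x ∈ t', x) = 0 := by
      apply hφ
      rw [hsum', map_zero]
    exact cube_sidon t' ht'S ht'card this
  · rw [Set.ncard_image_of_injective _ hφ]
    have hfinj : Function.Injective (fun x : F => (x, x ^ 3)) :=
      fun a b h => congrArg Prod.fst h
    have hScard : S.ncard = Nat.card F := by
      rw [← Nat.card_coe_set_eq]
      exact Nat.card_range_of_injective hfinj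
    rw [hScard, hF, GaloisField.card 2 k hk]

theorem stmt16 :
    (∀ n : ℕ, 0 < n → Even n →
      ∃ A : Set (Fin n → ZMod 2), IsMGeneral (ZMod 2) 4 A ∧ A.ncard = 2 ^ (n / 2)) ∧
    (∀ n : ℕ, 2 ≤ n →
      2 ^ (n / 2) ≤ r4 n ∧
      (1 / Real.sqrt 2) * (2 : ℝ) ^ ((n : ℝ) / 2) ≤ ((2 : ℕ) ^ (n / 2) : ℝ)) := by
  constructor
  · intro n hn he
    have hk : n / 2 ≠ 0 := by
      obtain ⟨k, rfl⟩ := he; omega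
    have h2 : 2 * (n / 2) ≤ n := by omega
    exact main_construction hk h2
  · intro n hn
    constructor
    · have hk : n / 2 ≠ 0 := by omega
      obtain ⟨A, hA, hcard⟩ := main_construction hk (by omega : 2 * (n / 2) ≤ n)
      apply le_csSup
      · refine ⟨Nat.card (Fin n → ZMod 2), ?_⟩
        rintro N ⟨B, -, rfl⟩
        rw [← Set.ncard_univ]
        exact Set.ncard_le_ncard (Set.subset_univ _) Set.finite_univ
      · exact ⟨A, hA, hcard⟩
    · have hm : n ≤ 2 * (n / 2) + 1 := by omega
      set m := n / 2 with hmdef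
      have h2 : (0:ℝ) < 2 := two_pos
      have hsq : (0:ℝ) < Real.sqrt 2 := Real.sqrt_pos.2 h2
      have hexp : (n:ℝ)/2 ≤ (m:ℝ) + 1/2 := by
        have : (n:ℝ) ≤ 2*(m:ℝ)+1 := by exact_mod_cast hm
        linarith
      have key : (2:ℝ) ^ ((n:ℝ)/2) ≤ (2:ℝ) ^ ((m:ℝ) + 1/2) :=
        Real.rpow_le_rpow_of_exponent_le one_le_two hexp
      have heq : (2:ℝ) ^ ((m:ℝ) + 1/2) = (2:ℝ) ^ (m:ℕ) * Real.sqrt 2 := by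
        rw [Real.rpow_add h2, Real.rpow_natCast, Real.sqrt_eq_rpow]
      calc (1 / Real.sqrt 2) * (2:ℝ) ^ ((n:ℝ)/2)
          ≤ (1 / Real.sqrt 2) * ((2:ℝ) ^ (m:ℕ) * Real.sqrt 2) := by
            rw [← heq]
            exact mul_le_mul_of_nonneg_left key (by positivity)
        _ = (2:ℝ) ^ (m:ℕ) := by field_simp
        _ = ((2:ℕ) ^ m : ℝ) := by push_cast; ring
end
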